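/- arXiv:1802.03507 — 3 statements merged into one kernel-verified Lean document; each statement's English description precedes it below -/
import Mathlib

section
/- Let q and n be coprime positive integers. Then |F(n,q)| = ∑_{I ⊆ {1,...,m}} (gcd(n, gcd(s_i : i ∈ I))/n) · ∏_{i ∈ I} (q^{ℓ_i} − 1), where for I = ∅ the inner gcd is 0 (so the term is 1) and the empty product is 1. -/
/-!
With `ψ z = exp (2πi z / n)`, summing `ψ (t ∑ z f(z))` over `t` detects `∑ z f(z) = 0`, so
`n |F(n,q)| = ∑_t ∏_z ∑_{a<q} ψ(tz)^a`. For fixed `t`, multiplication by the unit `q` permutes the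
`z` with `tz ≠ 0` and maps `ψ(tz)` to `ψ(tz)^q`, so the geometric sums over those `z` multiply to
`1`; the factor is `q ^ #{z | tz = 0}`. The kernel of `z ↦ tz` is a union of cyclotomic cosets,
whence `q ^ #{z | tz = 0} = ∏_{t s_i = 0} ((q^ℓ_i - 1) + 1)`. Expanding this product over subsets
`I` and swapping sums, the coefficient of `∏_{i ∈ I} (q^ℓ_i - 1)` counts the `t` killing every
`s_i`, `i ∈ I`, i.e. killing `gcd_I s_i`; there are `gcd(n, gcd_I s_i)` of them.
-/

open Finset

theorem AddChar.map_sum_eq_prod {ι A M : Type*} [AddCommMonoid A] [CommMonoid M]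
    (ψ : AddChar A M) (s : Finset ι) (g : ι → A) : ψ (∑ i ∈ s, g i) = ∏ i ∈ s, ψ (g i) := by
  classical
  induction s using Finset.induction_on with
  | empty => simp
  | insert a s ha ih => rw [sum_insert ha, prod_insert ha, map_add_eq_mul, ih]

theorem card_mul_card_eq_sum_prod_geom_sum {R : Type*} [CommRing R] [Fintype R] [DecidableEq R]
    {ψ : AddChar R ℂ} (hψ : ψ.IsPrimitive) (q : ℕ) :
    (Fintype.card R * #{f : R → Fin q | ∑ z, z * ((f z : ℕ) : R) = 0} : ℂ) =
      ∑ t, ∏ z, ∑ a ∈ range q, ψ (t * z) ^ a := by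
  have h_expand (t : R) : ∏ z, ∑ a ∈ range q, ψ (t * z) ^ a =
      ∑ f : R → Fin q, ψ (t * ∑ z, z * ((f z : ℕ) : R)) := by
    simp only [← Fin.sum_univ_eq_sum_range, Fintype.prod_sum, mul_sum, AddChar.map_sum_eq_prod,
      ← AddChar.map_nsmul_eq_pow, nsmul_eq_mul, mul_comm, mul_assoc]
  simp only [h_expand]
  rw [sum_comm]
  simp only [AddChar.sum_mulShift _ hψ]
  push_cast
  rw [sum_ite, sum_const_zero, add_zero, sum_const, nsmul_eq_mul, mul_comm]

theorem prod_geom_sum_eq_pow_card {ι K : Type*} [Fintype ι] [Field K] [DecidableEq K] (q : ℕ)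
    (x : ι → K) (σ : ι ≃ ι) (hσ : ∀ i, x (σ i) = x i ^ q) (hσ₁ : ∀ i, x (σ i) = 1 ↔ x i = 1) :
    ∏ i, ∑ a ∈ range q, x i ^ a = q ^ #{i | x i = 1} := by
  rw [← prod_filter_mul_prod_filter_not univ (x · = 1)]
  have h_one : ∏ i with x i = 1, ∑ a ∈ range q, x i ^ a = q ^ #{i | x i = 1} := by
    rw [prod_congr rfl fun i hi => by rw [(mem_filter.1 hi).2], prod_const]
    simp
  have h_ne_one : ∏ i with x i ≠ 1, ∑ a ∈ range q, x i ^ a = 1 := by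
    have h_ne : ∏ i with x i ≠ 1, (x i - 1) ≠ 0 :=
      prod_ne_zero_iff.2 fun i hi => sub_ne_zero.2 (mem_filter.1 hi).2
    have h_perm : ∏ i with x i ≠ 1, (x i ^ q - 1) = ∏ i with x i ≠ 1, (x i - 1) :=
      prod_equiv σ (by simp [hσ₁]) fun i _ => by rw [hσ]
    refine mul_right_cancel₀ h_ne ?_
    rw [one_mul, ← prod_mul_distrib, ← h_perm]
    exact prod_congr rfl fun i _ => geom_sum_mul (x i) q
  rw [h_one, h_ne_one, mul_one]

namespace ZMod

variable {q n : ℕ} [NeZero n]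

theorem prod_geom_sum_stdAddChar (hqn : q.Coprime n) (t : ZMod n) :
    ∏ z, ∑ a ∈ range q, stdAddChar (t * z) ^ a = q ^ #{z | t * z = 0} := by
  classical
  have hq : IsUnit (q : ZMod n) := (isUnit_iff_coprime q n).2 hqn
  have h_one (y : ZMod n) : stdAddChar y = 1 ↔ y = 0 := by
    rw [← AddChar.map_zero_eq_one (stdAddChar (N := n)), injective_stdAddChar.eq_iff]
  have h_mul (z : ZMod n) : t * (hq.unit * z) = q • (t * z) := by
    rw [hq.unit_spec, nsmul_eq_mul, mul_left_comm]
  rw [prod_geom_sum_eq_pow_card q _ (Units.mulLeft hq.unit)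
    (fun z => by rw [Units.mulLeft_apply, h_mul, AddChar.map_nsmul_eq_pow])
    (fun z => by rw [Units.mulLeft_apply, h_one, h_one, h_mul, nsmul_eq_mul, hq.mul_right_eq_zero])]
  simp only [h_one]

theorem card_mul_card_eq_sum_pow (hqn : q.Coprime n) :
    n * #{f : ZMod n → Fin q | ∑ z, z * ((f z : ℕ) : ZMod n) = 0} =
      ∑ t : ZMod n, q ^ #{z | t * z = 0} := by
  have h := card_mul_card_eq_sum_prod_geom_sum (isPrimitive_stdAddChar n) q
  simp only [ZMod.card, prod_geom_sum_stdAddChar hqn] at h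
  exact_mod_cast h

end ZMod

namespace Function

variable {α : Type*} {f : α → α} {x : α} {ℓ : ℕ}

theorem minimalPeriod_eq_of_isLeast (h : IsLeast {l | 0 < l ∧ f^[l] x = x} ℓ) :
    minimalPeriod f x = ℓ :=
  (IsPeriodicPt.minimalPeriod_le h.1.1 h.1.2).antisymm <|
    h.2 ⟨minimalPeriod_pos_iff_mem_periodicPts.2 ⟨ℓ, h.1.1, h.1.2⟩, isPeriodicPt_minimalPeriod f x⟩

variable {ι : Type*} {s : ι → α}

theorem bijective_sigma_iterate (hS : ∀ x, ∃! i, ∃ j, x = f^[j] (s i))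
    (hper : ∀ i, 0 < minimalPeriod f (s i)) :
    Bijective fun p : Σ i, Fin (minimalPeriod f (s i)) => f^[p.2] (s p.1) := by
  constructor
  · rintro ⟨i, j⟩ ⟨i', j'⟩ h
    obtain rfl : i = i' := (hS _).unique ⟨j, rfl⟩ ⟨j', h⟩
    obtain rfl : j = j' := Fin.ext (iterate_injOn_Iio_minimalPeriod j.2 j'.2 h)
    rfl
  · intro x
    obtain ⟨i, ⟨j, rfl⟩, -⟩ := hS x
    exact ⟨⟨i, j % _, Nat.mod_lt _ (hper i)⟩, iterate_mod_minimalPeriod_eq⟩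

theorem card_filter_eq_sum_minimalPeriod [Fintype α] [Fintype ι] {p : α → Prop} [DecidablePred p]
    (hp : ∀ x, p (f x) ↔ p x) (hS : ∀ x, ∃! i, ∃ j, x = f^[j] (s i))
    (hper : ∀ i, 0 < minimalPeriod f (s i)) :
    #{x | p x} = ∑ i with p (s i), minimalPeriod f (s i) := by
  rw [card_filter, sum_filter,
    ← Fintype.sum_bijective _ (bijective_sigma_iterate hS hper) _ _ fun _ => rfl,
    Fintype.sum_sigma]
  have hpj (j : ℕ) (x : α) : p (f^[j] x) ↔ p x := by
    rw [← comp_apply (f := p), iterate_invariant (funext fun x => propext (hp x))]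
  simp [hpj]

end Function

section UnitOrbits

variable {R ι : Type*} [CommRing R] [Fintype R] [DecidableEq R] [Fintype ι] {u : R}
  {s : ι → R} {ℓ : ι → ℕ}

theorem card_mul_eq_zero_eq_sum_orbit_card (hu : IsUnit u)
    (hS : ∀ z : R, ∃! i, ∃ j : ℕ, z = u ^ j * s i)
    (hl : ∀ i, IsLeast {l : ℕ | 0 < l ∧ u ^ l * s i = s i} (ℓ i)) (t : R) :
    #{z | t * z = 0} = ∑ i with t * s i = 0, ℓ i := by
  have h_iter (j : ℕ) (z : R) : (u * ·)^[j] z = u ^ j * z := congrFun (mul_left_iterate u j) z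
  have h_period (i : ι) : Function.minimalPeriod (u * ·) (s i) = ℓ i :=
    Function.minimalPeriod_eq_of_isLeast (by simpa only [h_iter] using hl i)
  rw [Function.card_filter_eq_sum_minimalPeriod (p := (t * · = 0))
    (fun z => by rw [mul_left_comm, hu.mul_right_eq_zero]) (by simpa only [h_iter] using hS)
    (fun i => h_period i ▸ (hl i).1.1)]
  simp only [h_period]

end UnitOrbits

namespace ZMod

variable {q n : ℕ} [NeZero n] {ι : Type*}

theorem card_mul_natCast_eq_zero (a : ℕ) : #{t : ZMod n | t * a = 0} = n.gcd a := by
  have h := IsAddCyclic.card_nsmulAddMonoidHom_ker (ZMod n) a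
  rw [Nat.card_zmod] at h
  rw [← Fintype.card_subtype, ← Nat.card_eq_fintype_card, ← h]
  exact Nat.card_congr <| Equiv.subtypeEquivRight fun t => by
    rw [AddMonoidHom.mem_ker, nsmulAddMonoidHom_apply, nsmul_eq_mul, mul_comm]

theorem forall_mul_natCast_eq_zero_iff (I : Finset ι) (s : ι → ℕ) (t : ZMod n) :
    (∀ i ∈ I, t * s i = 0) ↔ t * (I.gcd s : ℕ) = 0 := by
  have key : ∀ a : ℕ, t * a = 0 ↔ n ∣ t.val * a := fun a => by
    rw [← ZMod.natCast_eq_zero_iff, Nat.cast_mul, natCast_val, cast_id]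
  simp only [key, ← Finset.dvd_gcd_iff, Finset.gcd_mul_left, normalize_eq]

theorem card_forall_mul_natCast_eq_zero (I : Finset ι) (s : ι → ℕ) :
    #{t : ZMod n | ∀ i ∈ I, t * s i = 0} = n.gcd (I.gcd s) := by
  simp only [forall_mul_natCast_eq_zero_iff, card_mul_natCast_eq_zero]

theorem sum_pow_card_mul_eq_zero [Fintype ι] [DecidableEq ι] {s ℓ : ι → ℕ} {K : Type*} [CommRing K]
    (hq : IsUnit (q : ZMod n))
    (hS : ∀ z : ZMod n, ∃! i, ∃ j : ℕ, z = (q : ZMod n) ^ j * s i)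
    (hl : ∀ i, IsLeast {l : ℕ | 0 < l ∧ (q : ZMod n) ^ l * s i = s i} (ℓ i)) :
    ∑ t : ZMod n, (q : K) ^ #{z | t * z = 0} =
      ∑ I : Finset ι, (n.gcd (I.gcd s) : K) * ∏ i ∈ I, ((q : K) ^ ℓ i - 1) := by
  have h_expand (t : ZMod n) : (q : K) ^ #{z | t * z = 0} =
      ∑ I : Finset ι, if ∀ i ∈ I, t * s i = 0 then ∏ i ∈ I, ((q : K) ^ ℓ i - 1) else 0 := by
    rw [card_mul_eq_zero_eq_sum_orbit_card hq hS hl, ← prod_pow_eq_pow_sum,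
      ← prod_congr rfl fun i _ => sub_add_cancel ((q : K) ^ ℓ i) 1, prod_add_one,
      ← filter_subset_univ, sum_filter]
    simp only [subset_iff, mem_filter, mem_univ, true_and]
  simp only [h_expand]
  rw [sum_comm]
  refine sum_congr rfl fun I _ => ?_
  rw [← sum_filter, sum_const, nsmul_eq_mul]
  congr 2
  convert card_forall_mul_natCast_eq_zero I s

end ZMod

theorem F_card_formula_general
    (q n : ℕ) [NeZero n] (hqn : Nat.Coprime q n)
    (m : ℕ) (s : Fin m → ℕ) (ℓ : Fin m → ℕ)
    -- the orbits of `z ↦ q·z` on `ZMod n` are exactly the sets `{q^j·s_i}`, and they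
    -- partition `ZMod n`: every `z` lies in exactly one of them
    (hS : ∀ z : ZMod n, ∃! i : Fin m, ∃ j : ℕ, z = (q : ZMod n) ^ j * (s i : ZMod n))
    -- `ℓ i` is the least positive integer with `q^(ℓ i) · s i ≡ s i (mod n)`
    (hl : ∀ i, IsLeast {l : ℕ | 0 < l ∧ (q : ZMod n) ^ l * (s i : ZMod n) = (s i : ZMod n)} (ℓ i)) :
    (Nat.card {f : ZMod n → Fin q // ∑ z : ZMod n, z * ((f z : ℕ) : ZMod n) = 0} : ℚ) =
      ∑ I : Finset (Fin m),
        (Nat.gcd n (I.gcd s) : ℚ) / (n : ℚ) * ∏ i ∈ I, ((q : ℚ) ^ (ℓ i) - 1) := by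
  have h_count : (n * #{f : ZMod n → Fin q | ∑ z, z * ((f z : ℕ) : ZMod n) = 0} : ℚ) =
      ∑ t : ZMod n, (q : ℚ) ^ #{z | t * z = 0} := by
    exact_mod_cast ZMod.card_mul_card_eq_sum_pow hqn
  rw [ZMod.sum_pow_card_mul_eq_zero ((ZMod.isUnit_iff_coprime q n).2 hqn) hS hl] at h_count
  rw [Nat.card_eq_fintype_card, Fintype.card_subtype]
  simp only [div_mul_eq_mul_div, ← sum_div]
  rw [eq_div_iff (by exact_mod_cast NeZero.ne n), mul_comm, h_count]

/-- Cardinality formula for the set `F(n,q)` of functions `f : ZMod n → {0,…,q-1}`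
with `∑ z, z·f(z) ≡ 0 (mod n)`, in terms of the cyclotomic cosets of `ZMod n`:
`S_i = {q^j·s_i : j ∈ ℕ}` (orbits of `z ↦ q·z`), with representatives `s i` and
`ℓ i` the least positive integer with `q^(ℓ i)·s_i ≡ s_i (mod n)`. -/
theorem F_card_formula
    (q n : ℕ) (hq : 0 < q) (hn : 0 < n) [NeZero n] (hqn : Nat.Coprime q n)
    (m : ℕ) (s : Fin m → ℕ) (ℓ : Fin m → ℕ)
    -- the orbits of `z ↦ q·z` on `ZMod n` are exactly the sets `{q^j·s_i}`, and they
    -- partition `ZMod n`: every `z` lies in exactly one of them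
    (hS : ∀ z : ZMod n, ∃! i : Fin m, ∃ j : ℕ, z = (q : ZMod n) ^ j * (s i : ZMod n))
    -- `ℓ i` is the least positive integer with `q^(ℓ i) · s i ≡ s i (mod n)`
    (hl : ∀ i, IsLeast {l : ℕ | 0 < l ∧ (q : ZMod n) ^ l * (s i : ZMod n) = (s i : ZMod n)} (ℓ i)) :
    (Nat.card {f : ZMod n → Fin q // ∑ z : ZMod n, z * ((f z : ℕ) : ZMod n) = 0} : ℚ) =
      ∑ I : Finset (Fin m),
        (Nat.gcd n (I.gcd s) : ℚ) / (n : ℚ) * ∏ i ∈ I, ((q : ℚ) ^ (ℓ i) - 1) :=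
  F_card_formula_general q n hqn m s ℓ hS hl
end

section
/- Let q and n be coprime positive integers, and let I ⊆ {1,...,m}. Then |F_I| = (gcd(n, gcd(s_i : i ∈ I))/n) · ∏_{i ∈ I} (q^{ℓ_i} − 1), where for I = ∅ the inner gcd is 0 and the empty product is 1. -/
/-!
Write `f` on the orbit `S_i = {q ^ j * s_i : j < ℓ_i}` as the base-`q` digits of a number
`N_i < q ^ ℓ_i`. Then `∑ z * f z ≡ ∑ s_i * N_i (mod n)`, and `f = q - 1` on `S_i` exactly when
`N_i = q ^ ℓ_i - 1`. As `n ∣ s_i * (q ^ ℓ_i - 1)`, the orbits outside `I` drop out of the sum,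
and for `i ∈ I` the numbers `N_i` run over `ZMod (q ^ ℓ_i - 1)`. So `F_I` is the kernel of
`(N_i) ↦ ∑ s_i * N_i` from `∏_{i ∈ I} ZMod (q ^ ℓ_i - 1)` to `ZMod n`, whose image is, by Bézout,
the subgroup generated by `gcd_{i ∈ I} s_i`, of order `n / gcd(n, gcd_{i ∈ I} s_i)`.
-/

open Finset Function

theorem Finset.natCast_gcd {ι : Type*} (t : Finset ι) (c : ι → ℕ) :
    ((t.gcd c : ℕ) : ℤ) = t.gcd fun i => (c i : ℤ) := by
  classical
  induction t using Finset.induction_on with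
  | empty => simp
  | insert a t _ ih =>
    rw [gcd_insert, gcd_insert, ← ih, ← Int.coe_gcd, Int.gcd_natCast_natCast]
    rfl

theorem ZMod.val_finEquiv {Q : ℕ} [NeZero Q] (y : Fin Q) : (ZMod.finEquiv Q y).val = y := by
  cases Q with
  | zero => exact absurd rfl (NeZero.ne 0)
  | succ Q => rfl

def ZMod.liftMul (n : ℕ) {c Q : ℕ} (h : n ∣ c * Q) : ZMod Q →+ ZMod n :=
  ZMod.lift Q ⟨c • Int.castAddHom (ZMod n), by
    simpa [← Nat.cast_mul, ZMod.natCast_eq_zero_iff] using h⟩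

theorem ZMod.liftMul_intCast {n c Q : ℕ} (h : n ∣ c * Q) (k : ℤ) :
    ZMod.liftMul n h k = ((c * k : ℤ) : ZMod n) := by
  simp [ZMod.liftMul, ZMod.lift_coe]

section WeightedSum

variable (n : ℕ) {ι : Type*} [Fintype ι] {c Q : ι → ℕ}

def weightedSumHom (hc : ∀ i, n ∣ c i * Q i) : (Π i, ZMod (Q i)) →+ ZMod n :=
  ∑ i, (ZMod.liftMul n (hc i)).comp (Pi.evalAddMonoidHom (fun i => ZMod (Q i)) i)

variable {n}

theorem weightedSumHom_apply [∀ i, NeZero (Q i)] (hc : ∀ i, n ∣ c i * Q i)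
    (y : Π i, ZMod (Q i)) :
    weightedSumHom n hc y = ∑ i, (c i : ZMod n) * ((y i).val : ZMod n) := by
  simp only [weightedSumHom, AddMonoidHom.finsetSum_apply, AddMonoidHom.comp_apply,
    Pi.evalAddMonoidHom_apply]
  refine sum_congr rfl fun i _ => ?_
  conv_lhs => rw [← ZMod.natCast_zmod_val (y i), ← Int.cast_natCast]
  rw [ZMod.liftMul_intCast]
  push_cast; rfl

theorem weightedSumHom_apply_intCast (hc : ∀ i, n ∣ c i * Q i) (b : ι → ℤ) :
    weightedSumHom n hc (fun i => b i) = ∑ i, ((c i * b i : ℤ) : ZMod n) := by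
  simp [weightedSumHom, ZMod.liftMul_intCast]

theorem range_weightedSumHom (hc : ∀ i, n ∣ c i * Q i) :
    (weightedSumHom n hc).range = AddSubgroup.zmultiples ((univ.gcd c : ℕ) : ZMod n) := by
  apply le_antisymm
  · rintro _ ⟨y, rfl⟩
    obtain ⟨b, rfl⟩ : ∃ b : ι → ℤ, (fun i => (b i : ZMod (Q i))) = y :=
      ⟨fun i => (y i).cast, funext fun i => ZMod.intCast_zmod_cast (y i)⟩
    rw [weightedSumHom_apply_intCast]
    refine AddSubgroup.sum_mem _ fun i _ => ?_
    obtain ⟨d, hd⟩ := gcd_dvd (f := c) (mem_univ i)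
    exact ⟨d * b i, by simp only [zsmul_eq_mul, hd]; push_cast; ring⟩
  · rw [AddSubgroup.zmultiples_le]
    obtain ⟨b, hb⟩ := univ.gcd_eq_sum_mul fun i => (c i : ℤ)
    refine ⟨fun i => b i, ?_⟩
    rw [weightedSumHom_apply_intCast, ← Int.cast_natCast, Finset.natCast_gcd, hb]
    push_cast; rfl

theorem card_ker_weightedSumHom [NeZero n] [∀ i, NeZero (Q i)] (hc : ∀ i, n ∣ c i * Q i) :
    n * Nat.card (weightedSumHom n hc).ker = n.gcd (univ.gcd c) * ∏ i, Q i := by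
  have hd : n.gcd (univ.gcd c) ∣ n := Nat.gcd_dvd_left _ _
  have key : Nat.card (weightedSumHom n hc).ker * (n / n.gcd (univ.gcd c)) = ∏ i, Q i := by
    rw [← ZMod.addOrderOf_coe _ (NeZero.ne n), ← Nat.card_zmultiples, ← range_weightedSumHom hc,
      ← AddSubgroup.index_ker, AddSubgroup.card_mul_index, Nat.card_pi]
    simp
  calc n * Nat.card (weightedSumHom n hc).ker
      = Nat.card (weightedSumHom n hc).ker * (n / n.gcd (univ.gcd c)) * n.gcd (univ.gcd c) := by
        rw [mul_assoc, Nat.div_mul_cancel hd, mul_comm]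
    _ = n.gcd (univ.gcd c) * ∏ i, Q i := by rw [key, mul_comm]

theorem card_weightedSum_eq_zero [NeZero n] (hc : ∀ i, n ∣ c i * Q i) :
    n * Nat.card {y : Π i, Fin (Q i) // ∑ i, (c i : ZMod n) * ((y i : ℕ) : ZMod n) = 0} =
      n.gcd (univ.gcd c) * ∏ i, Q i := by
  by_cases hQ : ∀ i, NeZero (Q i)
  · rw [← card_ker_weightedSumHom hc]
    congr 1
    refine Nat.card_congr <|
      (Equiv.piCongrRight fun i => (ZMod.finEquiv (Q i)).toEquiv).subtypeEquiv fun y => ?_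
    simp [AddMonoidHom.mem_ker, weightedSumHom_apply, ZMod.val_finEquiv]
  · obtain ⟨i, hi⟩ := not_forall.1 hQ
    rw [neZero_iff, not_not] at hi
    have : IsEmpty (Π i, Fin (Q i)) := isEmpty_pi.2 ⟨i, hi ▸ inferInstance⟩
    simp [prod_eq_zero (mem_univ i) hi]

end WeightedSum

theorem finFunctionFinEquiv_eq_pow_sub_one_iff {q L : ℕ} (hq : 0 < q) (g : Fin L → Fin q) :
    (finFunctionFinEquiv g : ℕ) = q ^ L - 1 ↔ ∀ j, (g j : ℕ) = q - 1 := by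
  have htop : ∑ j : Fin L, (q - 1) * q ^ (j : ℕ) = q ^ L - 1 := by
    have := geom_sum_mul_add (q - 1) L
    rw [Nat.sub_one_add_one hq.ne', mul_comm] at this
    rw [Fin.sum_univ_eq_sum_range (fun j => (q - 1) * q ^ j), ← mul_sum]
    omega
  rw [finFunctionFinEquiv_apply, ← htop, sum_eq_sum_iff_of_le fun j _ =>
    Nat.mul_le_mul_right _ (Nat.le_sub_one_of_lt (g j).2)]
  simp [hq.ne']

section Orbit

variable {M : Type*} [Monoid M] {a x : M} {l : ℕ}

theorem minimalPeriod_mul_left_eq (h : IsLeast {k | 0 < k ∧ a ^ k * x = x} l) :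
    minimalPeriod (a * ·) x = l := by
  have hper : ∀ k, IsPeriodicPt (a * ·) k x ↔ a ^ k * x = x := fun k => by
    simp [IsPeriodicPt, IsFixedPt]
  have hl := (hper l).2 h.1.2
  exact le_antisymm (hl.minimalPeriod_le h.1.1)
    (h.2 ⟨hl.minimalPeriod_pos h.1.1, (hper _).1 (isPeriodicPt_minimalPeriod _ _)⟩)

theorem pow_mod_mul_eq (h : IsLeast {k | 0 < k ∧ a ^ k * x = x} l) (j : ℕ) :
    a ^ (j % l) * x = a ^ j * x := by
  simpa [minimalPeriod_mul_left_eq h] using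
    iterate_mod_minimalPeriod_eq (f := (a * ·)) (x := x) (n := j)

theorem pow_mul_eq_pow_mul_iff (h : IsLeast {k | 0 < k ∧ a ^ k * x = x} l) {j k : ℕ}
    (hj : j < l) (hk : k < l) : a ^ j * x = a ^ k * x ↔ j = k := by
  rw [← minimalPeriod_mul_left_eq h] at hj hk
  simpa using iterate_eq_iterate_iff_of_lt_minimalPeriod hj hk

variable {m : ℕ} {x : Fin m → M} {ℓ : Fin m → ℕ}

noncomputable def orbitEquiv (hS : ∀ z, ∃! i, ∃ j : ℕ, z = a ^ j * x i)
    (hl : ∀ i, IsLeast {k | 0 < k ∧ a ^ k * x i = x i} (ℓ i)) : (Σ i, Fin (ℓ i)) ≃ M :=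
  Equiv.ofBijective (fun p => a ^ (p.2 : ℕ) * x p.1) <| by
    refine ⟨?_, fun z => ?_⟩
    · rintro ⟨i, j⟩ ⟨i', j'⟩ h
      obtain rfl : i = i' := (hS _).unique ⟨j, rfl⟩ ⟨j', h⟩
      obtain rfl : j = j' := Fin.ext <| (pow_mul_eq_pow_mul_iff (hl i) j.2 j'.2).1 h
      rfl
    · obtain ⟨i, ⟨j, rfl⟩, -⟩ := hS z
      exact ⟨⟨i, j % ℓ i, Nat.mod_lt _ (hl i).1.1⟩, pow_mod_mul_eq (hl i) j⟩

theorem orbitEquiv_apply (hS : ∀ z, ∃! i, ∃ j : ℕ, z = a ^ j * x i)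
    (hl : ∀ i, IsLeast {k | 0 < k ∧ a ^ k * x i = x i} (ℓ i)) (p : Σ i, Fin (ℓ i)) :
    orbitEquiv hS hl p = a ^ (p.2 : ℕ) * x p.1 :=
  rfl

/-- Reads `f` along the orbit of `x i` as the base-`q` digits of a number below `q ^ ℓ i`. -/
noncomputable def orbitDigitsEquiv (q : ℕ) (hS : ∀ z, ∃! i, ∃ j : ℕ, z = a ^ j * x i)
    (hl : ∀ i, IsLeast {k | 0 < k ∧ a ^ k * x i = x i} (ℓ i)) :
    (M → Fin q) ≃ Π i, Fin (q ^ ℓ i) :=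
  ((orbitEquiv hS hl).arrowCongr (Equiv.refl _)).symm.trans <|
    (Equiv.piCurry fun _ _ => Fin q).trans <| Equiv.piCongrRight fun _ => finFunctionFinEquiv

theorem orbitDigitsEquiv_apply {q : ℕ} (hS : ∀ z, ∃! i, ∃ j : ℕ, z = a ^ j * x i)
    (hl : ∀ i, IsLeast {k | 0 < k ∧ a ^ k * x i = x i} (ℓ i)) (f : M → Fin q) (i : Fin m) :
    orbitDigitsEquiv q hS hl f i =
      finFunctionFinEquiv fun j : Fin (ℓ i) => f (a ^ (j : ℕ) * x i) :=
  rfl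

theorem forall_orbit_eq_iff_orbitDigitsEquiv {q : ℕ} (hq : 0 < q)
    (hS : ∀ z, ∃! i, ∃ j : ℕ, z = a ^ j * x i)
    (hl : ∀ i, IsLeast {k | 0 < k ∧ a ^ k * x i = x i} (ℓ i)) (f : M → Fin q) (i : Fin m) :
    (∀ z, (∃ j : ℕ, z = a ^ j * x i) → (f z : ℕ) = q - 1) ↔
      (orbitDigitsEquiv q hS hl f i : ℕ) = q ^ ℓ i - 1 := by
  rw [orbitDigitsEquiv_apply, finFunctionFinEquiv_eq_pow_sub_one_iff hq]
  refine ⟨fun h j => h _ ⟨j, rfl⟩, ?_⟩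
  rintro h _ ⟨j, rfl⟩
  rw [← pow_mod_mul_eq (hl i)]
  exact h ⟨j % ℓ i, Nat.mod_lt _ (hl i).1.1⟩

end Orbit

theorem sum_mul_eq_sum_mul_orbitDigitsEquiv {R : Type*} [CommSemiring R] [Fintype R] {q m : ℕ}
    {x : Fin m → R} {ℓ : Fin m → ℕ} (hS : ∀ z, ∃! i, ∃ j : ℕ, z = (q : R) ^ j * x i)
    (hl : ∀ i, IsLeast {k | 0 < k ∧ (q : R) ^ k * x i = x i} (ℓ i)) (f : R → Fin q) :
    ∑ z, z * ((f z : ℕ) : R) = ∑ i, x i * ((orbitDigitsEquiv q hS hl f i : ℕ) : R) := by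
  rw [← (orbitEquiv hS hl).sum_comp, Fintype.sum_sigma]
  refine sum_congr rfl fun i _ => ?_
  rw [orbitDigitsEquiv_apply, finFunctionFinEquiv_apply, Nat.cast_sum, mul_sum]
  refine sum_congr rfl fun j _ => ?_
  rw [orbitEquiv_apply]
  push_cast
  ring

theorem card_eq_card_orbitDigits {R : Type*} [CommSemiring R] [Fintype R] {q m : ℕ} (hq : 0 < q)
    {x : Fin m → R} {ℓ : Fin m → ℕ} (hS : ∀ z, ∃! i, ∃ j : ℕ, z = (q : R) ^ j * x i)
    (hl : ∀ i, IsLeast {k | 0 < k ∧ (q : R) ^ k * x i = x i} (ℓ i)) (I : Finset (Fin m)) :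
    Nat.card {f : R → Fin q // (∑ z, z * ((f z : ℕ) : R) = 0) ∧
        ∀ i, ((∀ z, (∃ j : ℕ, z = (q : R) ^ j * x i) → (f z : ℕ) = q - 1) ↔ i ∉ I)} =
      Nat.card {N : Π i, Fin (q ^ ℓ i) // (∑ i, x i * ((N i : ℕ) : R) = 0) ∧
        ∀ i, ((N i : ℕ) = q ^ ℓ i - 1 ↔ i ∉ I)} :=
  Nat.card_congr <| (orbitDigitsEquiv q hS hl).subtypeEquiv fun f => by
    simp only [sum_mul_eq_sum_mul_orbitDigitsEquiv hS hl,
      forall_orbit_eq_iff_orbitDigitsEquiv hq hS hl]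

section TopOutside

variable {ι : Type*} [Fintype ι] [DecidableEq ι] {M : ι → ℕ} (I : Finset ι)

def topOutsideEquiv (hM : ∀ i, 0 < M i) :
    {N : Π i, Fin (M i) // ∀ i, ((N i : ℕ) = M i - 1 ↔ i ∉ I)} ≃ Π i : I, Fin (M i - 1) where
  toFun N i := ⟨N.1 i, lt_of_le_of_ne (Nat.le_sub_one_of_lt (N.1 i).2) fun h => (N.2 i).1 h i.2⟩
  invFun y := ⟨fun i => if h : i ∈ I then Fin.castLE (Nat.sub_le _ _) (y ⟨i, h⟩)
      else ⟨M i - 1, Nat.sub_lt (hM i) one_pos⟩, fun i => by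
    by_cases h : i ∈ I
    · simpa [h] using (y ⟨i, h⟩).2.ne
    · simp [h]⟩
  left_inv N := by
    ext i
    by_cases h : i ∈ I
    · simp [h]
    · simp [h, (N.2 i).2 h]
  right_inv y := by
    ext i
    simp

theorem card_topOutside_sum_eq_zero (n : ℕ) (c : ι → ℕ) (hM : ∀ i, 0 < M i)
    (hc : ∀ i, n ∣ c i * (M i - 1)) :
    Nat.card {N : Π i, Fin (M i) // (∑ i, (c i : ZMod n) * ((N i : ℕ) : ZMod n) = 0) ∧
        ∀ i, ((N i : ℕ) = M i - 1 ↔ i ∉ I)} =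
      Nat.card {y : Π i : I, Fin (M i - 1) //
        ∑ i : I, (c i : ZMod n) * ((y i : ℕ) : ZMod n) = 0} := by
  refine Nat.card_congr <| ((Equiv.subtypeEquivRight fun N => and_comm).trans
    (Equiv.subtypeSubtypeEquivSubtypeInter _ _).symm).trans <|
      (topOutsideEquiv I hM).subtypeEquiv fun N => ?_
  rw [← sum_subset (subset_univ I) fun i _ hi => ?_, ← sum_coe_sort]
  · rfl
  · rw [(N.2 i).2 hi, ← Nat.cast_mul, ZMod.natCast_eq_zero_iff]
    exact hc i

end TopOutside

theorem Finset.gcd_coe_sort {ι : Type*} (I : Finset ι) (f : ι → ℕ) :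
    (univ : Finset I).gcd (fun i => f i) = I.gcd f := by
  classical
  change univ.gcd (f ∘ Subtype.val) = _
  rw [← gcd_image, univ_eq_attach, attach_image_val]

theorem F_I_card_general
    (q n : ℕ) (hq : 0 < q) [NeZero n]
    (m : ℕ) (s : Fin m → ℕ) (ℓ : Fin m → ℕ)
    (hS : ∀ z : ZMod n, ∃! i : Fin m, ∃ j : ℕ, z = (q : ZMod n) ^ j * (s i : ZMod n))
    (hl : ∀ i, IsLeast {l : ℕ | 0 < l ∧ (q : ZMod n) ^ l * (s i : ZMod n) = (s i : ZMod n)} (ℓ i))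
    (I : Finset (Fin m)) :
    (Nat.card {f : ZMod n → Fin q //
        (∑ z : ZMod n, z * ((f z : ℕ) : ZMod n) = 0) ∧
        ∀ i, ((∀ z : ZMod n,
            (∃ j : ℕ, z = (q : ZMod n) ^ j * (s i : ZMod n)) → (f z : ℕ) = q - 1)
          ↔ i ∉ I)} : ℚ) =
      (Nat.gcd n (I.gcd s) : ℚ) / (n : ℚ) * ∏ i ∈ I, ((q : ℚ) ^ (ℓ i) - 1) := by
  have hdvd : ∀ i, n ∣ s i * (q ^ ℓ i - 1) := fun i => by
    rw [← ZMod.natCast_eq_zero_iff, Nat.cast_mul, Nat.cast_sub (Nat.one_le_pow _ _ hq)]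
    push_cast
    linear_combination (hl i).1.2
  have hcount := card_weightedSum_eq_zero (c := fun i : I => s i)
    (Q := fun i : I => q ^ ℓ i - 1) fun i => hdvd i
  rw [gcd_coe_sort, prod_coe_sort I fun i => q ^ ℓ i - 1,
    ← card_topOutside_sum_eq_zero I n s (fun i => pow_pos hq _) hdvd,
    ← card_eq_card_orbitDigits hq hS hl] at hcount
  have hcast : ∀ i, ((q ^ ℓ i - 1 : ℕ) : ℚ) = (q : ℚ) ^ ℓ i - 1 := fun i => by
    rw [Nat.cast_pred (pow_pos hq _), Nat.cast_pow]
  rw [div_mul_eq_mul_div, eq_div_iff (Nat.cast_ne_zero.2 (NeZero.ne n)), mul_comm]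
  simp_rw [← hcast]
  exact_mod_cast hcount

/-- For coprime positive integers `q` and `n` and `I ⊆ {1,…,m}`, the number of functions
`f : ZMod n → {0,…,q-1}` with `∑ z, z·f(z) ≡ 0 (mod n)` and taking the value `q-1` on all
of `S_i` exactly for `i ∉ I` equals `(gcd(n, gcd(s_i : i ∈ I)) / n) · ∏_{i ∈ I} (q^{ℓ_i} - 1)`.
Here `S_i = {q^j·s_i : j ∈ ℕ}` are the cyclotomic cosets (orbits of `z ↦ q·z` on `ZMod n`)
with representatives `s i`, and `ℓ i` is the least positive integer with
`q^{ℓ i}·s_i ≡ s_i (mod n)`. -/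
theorem F_I_card
    (q n : ℕ) (hq : 0 < q) (hn : 0 < n) [NeZero n] (hqn : Nat.Coprime q n)
    (m : ℕ) (s : Fin m → ℕ) (ℓ : Fin m → ℕ)
    (hS : ∀ z : ZMod n, ∃! i : Fin m, ∃ j : ℕ, z = (q : ZMod n) ^ j * (s i : ZMod n))
    (hl : ∀ i, IsLeast {l : ℕ | 0 < l ∧ (q : ZMod n) ^ l * (s i : ZMod n) = (s i : ZMod n)} (ℓ i))
    (I : Finset (Fin m)) :
    (Nat.card {f : ZMod n → Fin q //
        (∑ z : ZMod n, z * ((f z : ℕ) : ZMod n) = 0) ∧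
        ∀ i, ((∀ z : ZMod n,
            (∃ j : ℕ, z = (q : ZMod n) ^ j * (s i : ZMod n)) → (f z : ℕ) = q - 1)
          ↔ i ∉ I)} : ℚ) =
      (Nat.gcd n (I.gcd s) : ℚ) / (n : ℚ) * ∏ i ∈ I, ((q : ℚ) ^ (ℓ i) - 1) :=
  F_I_card_general q n hq m s ℓ hS hl I
end

section
/- Let q be a prime power and n a positive integer coprime to q, let I ⊆ {1,...,m}, and let α ∈ Q = F_q[X]/(X^n−1) be an element such that P_i divides α if and only if i ∉ I. Then the orbit of α under multiplication by X has cardinality |{α, Xα, ..., X^{n−1}α}| = n / gcd(n, gcd(s_i : i ∈ I)), where for I = ∅ the inner gcd is 0 (so the orbit has size 1). -/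
/-! The `P_i` are the minimal polynomials of representatives of the Frobenius orbits
`ω^k ↦ ω^{qk}` of the `n`-th roots of unity, so `X^n - 1` divides a polynomial exactly when the
polynomial vanishes at every `ω^{s_i}`. As `α` vanishes at `ω^{s_i}` precisely for `i ∉ I`, this
makes `X^k α = α` equivalent to `(ω^{s_i})^k = 1` for all `i ∈ I`, i.e. to `n ∣ s_i k` for all
`i ∈ I`, i.e. to `n / gcd(n, gcd_{i ∈ I} s_i) ∣ k`. So `α` is a periodic point of multiplication
by `X` with exactly this minimal period, which is the size of its orbit. -/

open Polynomial

/-- `Q = F[X]/(X^n - 1)`. -/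
abbrev Qring (F : Type) [Field F] (n : ℕ) := AdjoinRoot ((X : F[X]) ^ n - 1)

/-- The image of `X` in `Q`. -/
noncomputable def Xbar (F : Type) [Field F] (n : ℕ) : Qring F n := AdjoinRoot.root _

/-- The image in `Q` of the minimal polynomial over `F` of an element `x` of the
algebraic closure of `F`; for `x = ω^{s_i}` this is the element `P_i` of `Q`. -/
noncomputable def Pbar (F : Type) [Field F] (n : ℕ) (x : AlgebraicClosure F) : Qring F n :=
  AdjoinRoot.mk _ (minpoly F x)

theorem FiniteField.aeval_pow_card_pow {K A : Type*} [Field K] [Fintype K] [CommRing A]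
    [Algebra K A] (f : K[X]) (x : A) (j : ℕ) :
    aeval (x ^ Fintype.card K ^ j) f = aeval x f ^ Fintype.card K ^ j := by
  induction j with
  | zero => simp
  | succ j ih =>
    rw [pow_succ, pow_mul, pow_mul, ← expand_aeval, FiniteField.expand_card, map_pow, ih]

theorem Polynomial.X_pow_sub_one_dvd_iff_forall_aeval_pow {K L : Type*} [Field K] [Field L]
    [Algebra K L] {n : ℕ} [NeZero n] {ζ : L} (hζ : IsPrimitiveRoot ζ n) (f : K[X]) :
    X ^ n - 1 ∣ f ↔ ∀ k : ℕ, aeval (ζ ^ k) f = 0 := by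
  have hroot : ∀ k : ℕ, X - C (ζ ^ k) ∣ f.map (algebraMap K L) ↔ aeval (ζ ^ k) f = 0 := fun k => by
    rw [dvd_iff_isRoot, IsRoot, eval_map_algebraMap]
  rw [← map_dvd_map' (algebraMap K L), Polynomial.map_sub, Polynomial.map_pow, map_X,
    Polynomial.map_one, X_pow_sub_one_eq_prod (NeZero.pos n) hζ]
  refine ⟨fun h k => (hroot k).1 ((Finset.dvd_prod_of_mem (X - C ·) ?_).trans h), fun h => ?_⟩
  · rw [mem_nthRootsFinset (NeZero.pos n), ← pow_mul, mul_comm, pow_mul, hζ.pow_eq_one, one_pow]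
  refine Finset.prod_dvd_of_coprime
    ((pairwise_coprime_X_sub_C Function.injective_id).set_pairwise _) fun ξ hξ => ?_
  obtain ⟨k, -, rfl⟩ := hζ.eq_pow_of_pow_eq_one ((mem_nthRootsFinset (NeZero.pos n) 1).1 hξ)
  exact (hroot k).2 (h k)

theorem AdjoinRoot.mk_dvd_mk_iff {R : Type*} [CommRing R] {f p a : R[X]} (hp : p ∣ f) :
    mk f p ∣ mk f a ↔ p ∣ a := by
  refine ⟨fun ⟨c, hc⟩ => ?_, map_dvd _⟩
  obtain ⟨c, rfl⟩ := mk_surjective c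
  rw [← map_mul, mk_eq_mk] at hc
  simpa using dvd_add (hp.trans hc) (dvd_mul_right p c)

theorem Nat.dvd_mul_iff_div_gcd_dvd {n g k : ℕ} (hn : 0 < n) : n ∣ g * k ↔ n / n.gcd g ∣ k := by
  rw [← dvd_gcd_mul_iff_dvd_mul]
  nth_rw 1 [← Nat.mul_div_cancel' (Nat.gcd_dvd_left n g)]
  exact Nat.mul_dvd_mul_iff_left (Nat.gcd_pos_of_pos_left g hn)

namespace Function

variable {α : Type*} {f : α → α} {x : α}

theorem minimalPeriod_eq_of_isPeriodicPt_iff {d : ℕ} (h : ∀ k, IsPeriodicPt f k x ↔ d ∣ k) :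
    minimalPeriod f x = d :=
  Nat.dvd_antisymm (isPeriodicPt_iff_minimalPeriod_dvd.1 ((h d).2 dvd_rfl))
    ((h _).1 (isPeriodicPt_minimalPeriod f x))

theorem natCard_range_iterate (hx : x ∈ periodicPts f) :
    Nat.card (Set.range fun k => f^[k] x) = minimalPeriod f x := by
  have hrange :
      (Set.range fun k => f^[k] x) = (fun k => f^[k] x) '' Set.Iio (minimalPeriod f x) := by
    refine (Set.image_subset_range _ _).antisymm' ?_
    rintro _ ⟨k, rfl⟩
    exact ⟨k % minimalPeriod f x, Nat.mod_lt _ (minimalPeriod_pos_of_mem_periodicPts hx),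
      iterate_mod_minimalPeriod_eq⟩
  rw [hrange, Nat.card_image_of_injOn iterate_injOn_Iio_minimalPeriod]
  simp

end Function

theorem X_pow_sub_one_dvd_iff_forall_aeval_cosetRep {F L : Type*} [Field F] [Fintype F] [Field L]
    [Algebra F L] {n : ℕ} [NeZero n] {ω : L} (hω : IsPrimitiveRoot ω n) {ι : Type*} {s : ι → ℕ}
    (hS : ∀ z : ZMod n, ∃ i j, z = (Fintype.card F : ZMod n) ^ j * s i) (f : F[X]) :
    X ^ n - 1 ∣ f ↔ ∀ i, aeval (ω ^ s i) f = 0 := by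
  rw [X_pow_sub_one_dvd_iff_forall_aeval_pow hω]
  refine ⟨fun h i => h (s i), fun h k => ?_⟩
  obtain ⟨i, j, hj⟩ := hS k
  have hk : ω ^ k = (ω ^ s i) ^ Fintype.card F ^ j := by
    rw [← pow_mul, (hω.isOfFinOrder (NeZero.ne n)).pow_eq_pow_iff_modEq, ← hω.eq_orderOf,
      ← ZMod.natCast_eq_natCast_iff, hj]
    push_cast
    ring
  rw [hk, FiniteField.aeval_pow_card_pow, h i, zero_pow (pow_ne_zero _ Fintype.card_ne_zero)]

theorem Pbar_dvd_mk_iff {F : Type} [Field F] {n : ℕ} {x : AlgebraicClosure F} (hx : x ^ n = 1)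
    (a : F[X]) : Pbar F n x ∣ AdjoinRoot.mk _ a ↔ aeval x a = 0 := by
  rw [Pbar, AdjoinRoot.mk_dvd_mk_iff (minpoly.dvd F x (by simp [hx])), minpoly.dvd_iff]

theorem Xbar_pow_mul_mk_eq_self_iff {F : Type} [Field F] [Fintype F] {L : Type*} [Field L]
    [Algebra F L] {n : ℕ} [NeZero n] {ω : L} (hω : IsPrimitiveRoot ω n) {ι : Type*} {s : ι → ℕ}
    (hS : ∀ z : ZMod n, ∃ i j, z = (Fintype.card F : ZMod n) ^ j * s i) {I : Finset ι} {a : F[X]}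
    (ha : ∀ i, aeval (ω ^ s i) a = 0 ↔ i ∉ I) (k : ℕ) :
    Xbar F n ^ k * AdjoinRoot.mk _ a = AdjoinRoot.mk _ a ↔ n / n.gcd (I.gcd s) ∣ k := by
  have hfactor : ∀ i, aeval (ω ^ s i) ((X ^ k - 1) * a) = 0 ↔ (i ∈ I → n ∣ s i * k) := fun i => by
    rw [map_mul, mul_eq_zero, ha i, map_sub, map_pow, aeval_X, map_one, sub_eq_zero, ← pow_mul,
      hω.pow_eq_one_iff_dvd]
    tauto
  calc Xbar F n ^ k * AdjoinRoot.mk _ a = AdjoinRoot.mk _ a ↔ X ^ n - 1 ∣ (X ^ k - 1) * a := by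
        rw [Xbar, ← AdjoinRoot.mk_X, ← map_pow, ← map_mul, AdjoinRoot.mk_eq_mk, sub_one_mul]
    _ ↔ ∀ i ∈ I, n ∣ s i * k := by
        simp only [X_pow_sub_one_dvd_iff_forall_aeval_cosetRep hω hS, hfactor]
    _ ↔ n ∣ I.gcd s * k := by
        rw [← Finset.dvd_gcd_iff, Finset.gcd_mul_right, normalize_eq]
    _ ↔ n / n.gcd (I.gcd s) ∣ k := Nat.dvd_mul_iff_div_gcd_dvd (NeZero.pos n)

theorem orbit_card_general
    (q n : ℕ) [NeZero n]
    (F : Type) [Field F] [Fintype F] (hF : Fintype.card F = q)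
    (ω : AlgebraicClosure F) (hω : IsPrimitiveRoot ω n)
    (m : ℕ) (s : Fin m → ℕ)
    (hS : ∀ z : ZMod n, ∃! i : Fin m, ∃ j : ℕ, z = (q : ZMod n) ^ j * (s i : ZMod n))
    (I : Finset (Fin m)) (α : Qring F n)
    (hα : ∀ i, (Pbar F n (ω ^ (s i)) ∣ α ↔ i ∉ I)) :
    Nat.card {β : Qring F n | ∃ k : ℕ, β = (Xbar F n) ^ k * α} =
      n / Nat.gcd n (I.gcd s) := by
  subst hF
  obtain ⟨a, rfl⟩ := AdjoinRoot.mk_surjective α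
  have ha : ∀ i, aeval (ω ^ s i) a = 0 ↔ i ∉ I := fun i => by
    rw [← Pbar_dvd_mk_iff (by rw [← pow_mul, mul_comm, pow_mul, hω.pow_eq_one, one_pow]), hα]
  have hperiod : ∀ k, Function.IsPeriodicPt (Xbar F n * ·) k (AdjoinRoot.mk _ a) ↔
      n / n.gcd (I.gcd s) ∣ k := fun k => by
    rw [Function.IsPeriodicPt, Function.IsFixedPt, mul_left_iterate_apply,
      Xbar_pow_mul_mk_eq_self_iff hω (fun z => (hS z).exists) ha]
  have hpos : 0 < n / n.gcd (I.gcd s) :=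
    Nat.div_pos (Nat.gcd_le_left _ (NeZero.pos n)) (Nat.gcd_pos_of_pos_left _ (NeZero.pos n))
  have horbit : {β | ∃ k : ℕ, β = Xbar F n ^ k * AdjoinRoot.mk _ a} =
      Set.range fun k => (Xbar F n * ·)^[k] (AdjoinRoot.mk _ a) := by
    simp only [mul_left_iterate_apply, Set.range, eq_comm]
  rw [horbit, Function.natCard_range_iterate
    (Function.mk_mem_periodicPts hpos ((hperiod _).2 dvd_rfl)),
    Function.minimalPeriod_eq_of_isPeriodicPt_iff hperiod]

/-- For `q` a prime power coprime to `n`, `I ⊆ {1,…,m}`, and `α ∈ Q = F_q[X]/(X^n-1)`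
divisible by `P_i` exactly for `i ∉ I`, the orbit `{α, Xα, X²α, …}` of `α` under
multiplication by `X` has cardinality `n / gcd(n, gcd(s_i : i ∈ I))` (for `I = ∅`
the inner gcd is `0`, so the orbit has size `1`). Here `s i` are representatives of
the cyclotomic cosets (orbits of `z ↦ q·z` on `ZMod n`). -/
theorem orbit_card
    (q n : ℕ) (hq : IsPrimePow q) (hn : 0 < n) [NeZero n] (hqn : Nat.Coprime q n)
    (F : Type) [Field F] [Fintype F] (hF : Fintype.card F = q)
    (ω : AlgebraicClosure F) (hω : IsPrimitiveRoot ω n)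
    (m : ℕ) (s : Fin m → ℕ)
    (hS : ∀ z : ZMod n, ∃! i : Fin m, ∃ j : ℕ, z = (q : ZMod n) ^ j * (s i : ZMod n))
    (I : Finset (Fin m)) (α : Qring F n)
    (hα : ∀ i, (Pbar F n (ω ^ (s i)) ∣ α ↔ i ∉ I)) :
    Nat.card {β : Qring F n | ∃ k : ℕ, β = (Xbar F n) ^ k * α} =
      n / Nat.gcd n (I.gcd s) :=
  orbit_card_general q n F hF ω hω m s hS I α hα
end
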